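/- In the quantum generalized Heisenberg algebra H_q(f,g) with f = pt + e and g = ct + d (p, q ∈ K*, e, c, d ∈ K), the following identities hold: xt - p⁻¹tx = -p⁻¹ex, yt - pty = ey, and yx - qxy = ct + d; in particular, the subspace K + Kt + Kx + Ky + span of degree-≤1 monomials absorbs all commutation defects, making H_q(f,g) a skew PBW extension of K. -/
import Mathlib


/- STATEMENT 10: in the quantum generalized Heisenberg algebra H_q(f,g) with
f = pt + e, g = ct + d (p, q ∈ K*), the identities
xt - p⁻¹tx = -p⁻¹e·x,  yt - pty = e·y,  yx - qxy = ct + d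
hold, and all three commutation defects lie in the span of {1, t, x, y}
(so H_q(f,g) is a skew PBW extension of K). -/

noncomputable section

open FreeAlgebra Polynomial

variable (K : Type) [Field K]

/-- Relations of `H_q(f,g)`. t = ι 0, x = ι 1, y = ι 2. -/
inductive qghRel (q : K) (f g : Polynomial K) :
    FreeAlgebra K (Fin 3) → FreeAlgebra K (Fin 3) → Prop
  | r1 : qghRel q f g (ι K (0 : Fin 3) * ι K (1 : Fin 3))
      (ι K (1 : Fin 3) * Polynomial.aeval (ι K (0 : Fin 3)) f)
  | r2 : qghRel q f g (ι K (2 : Fin 3) * ι K (0 : Fin 3))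
      (Polynomial.aeval (ι K (0 : Fin 3)) f * ι K (2 : Fin 3))
  | r3 : qghRel q f g (ι K (2 : Fin 3) * ι K (1 : Fin 3) - q • (ι K (1 : Fin 3) * ι K (2 : Fin 3)))
      (Polynomial.aeval (ι K (0 : Fin 3)) g)

/-- The quantum generalized Heisenberg algebra `H_q(f,g)`. -/
abbrev QGH (q : K) (f g : Polynomial K) := RingQuot (qghRel K q f g)

/-- Generators of `H_q(f,g)`. -/
def qghGen (q : K) (f g : Polynomial K) (i : Fin 3) : QGH K q f g :=
  RingQuot.mkAlgHom K (qghRel K q f g) (ι K i)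

theorem stmt10 (p q e c d : K) (hp : p ≠ 0) (hq : q ≠ 0) :
    letI f : Polynomial K := C p * X + C e
    letI g : Polynomial K := C c * X + C d
    letI t := qghGen K q f g 0
    letI x := qghGen K q f g 1
    letI y := qghGen K q f g 2
    (x * t - p⁻¹ • (t * x) = (-(p⁻¹ * e)) • x ∧
      y * t - p • (t * y) = e • y ∧
      y * x - q • (x * y) = c • t + d • 1) ∧
    (x * t - p⁻¹ • (t * x) ∈ Submodule.span K {(1 : QGH K q f g), t, x, y} ∧
      y * t - p • (t * y) ∈ Submodule.span K {(1 : QGH K q f g), t, x, y} ∧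
      y * x - q • (x * y) ∈ Submodule.span K {(1 : QGH K q f g), t, x, y}) := by
  set f : Polynomial K := C p * X + C e with hf
  set g : Polynomial K := C c * X + C d with hg
  set t := qghGen K q f g 0 with ht
  set x := qghGen K q f g 1 with hx
  set y := qghGen K q f g 2 with hy
  have key : ∀ u v : FreeAlgebra K (Fin 3), qghRel K q f g u v →
      RingQuot.mkAlgHom K (qghRel K q f g) u = RingQuot.mkAlgHom K (qghRel K q f g) v :=
    fun u v h => RingQuot.mkAlgHom_rel K h
  have haev : RingQuot.mkAlgHom K (qghRel K q f g) (Polynomial.aeval (ι K (0 : Fin 3)) f)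
      = p • t + e • 1 := by
    show RingQuot.mkAlgHom K (qghRel K q f g) (Polynomial.aeval (ι K (0 : Fin 3)) (C p * X + C e)) = _
    simp only [map_add, map_mul, aeval_X, aeval_C]
    simp [ht, qghGen, Algebra.algebraMap_eq_smul_one, Algebra.smul_mul_assoc]
  have h1 : t * x = p • (x * t) + e • x := by
    have := key _ _ (qghRel.r1 (q := q) (f := f) (g := g))
    simp only [map_mul] at this
    rw [show RingQuot.mkAlgHom K (qghRel K q f g) (ι K (0:Fin 3)) = t from rfl,
        show RingQuot.mkAlgHom K (qghRel K q f g) (ι K (1:Fin 3)) = x from rfl, haev] at this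
    rw [this]; rw [mul_add]
    simp [Algebra.mul_smul_comm, smul_smul]
  have h2 : y * t = p • (t * y) + e • y := by
    have := key _ _ (qghRel.r2 (q := q) (f := f) (g := g))
    simp only [map_mul] at this
    rw [show RingQuot.mkAlgHom K (qghRel K q f g) (ι K (0:Fin 3)) = t from rfl,
        show RingQuot.mkAlgHom K (qghRel K q f g) (ι K (2:Fin 3)) = y from rfl, haev] at this
    rw [this]; rw [add_mul]
    simp [Algebra.smul_mul_assoc, smul_smul]
  have h3 : y * x - q • (x * y) = c • t + d • 1 := by
    have := key _ _ (qghRel.r3 (q := q) (f := f) (g := g))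
    simp only [map_sub, map_mul, map_smul] at this
    rw [show RingQuot.mkAlgHom K (qghRel K q f g) (ι K (1:Fin 3)) = x from rfl,
        show RingQuot.mkAlgHom K (qghRel K q f g) (ι K (2:Fin 3)) = y from rfl] at this
    rw [this]
    show RingQuot.mkAlgHom K (qghRel K q f g) (Polynomial.aeval (ι K (0 : Fin 3)) (C c * X + C d)) = _
    simp only [map_add, map_mul, aeval_X, aeval_C]
    simp [ht, qghGen, Algebra.algebraMap_eq_smul_one, Algebra.smul_mul_assoc]
  have e1 : x * t - p⁻¹ • (t * x) = (-(p⁻¹ * e)) • x := by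
    rw [h1, smul_add, smul_smul, inv_mul_cancel₀ hp, one_smul, smul_smul]
    module
  have e2 : y * t - p • (t * y) = e • y := by rw [h2]; abel
  refine ⟨⟨e1, e2, h3⟩, ?_, ?_, ?_⟩
  · rw [e1]
    exact Submodule.smul_mem _ _ (Submodule.subset_span (by simp))
  · rw [e2]
    exact Submodule.smul_mem _ _ (Submodule.subset_span (by simp))
  · rw [h3]
    exact add_mem (Submodule.smul_mem _ _ (Submodule.subset_span (by simp)))
      (Submodule.smul_mem _ _ (Submodule.subset_span (by simp)))


end
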